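/- Let Ω ⊆ ℝ² be measurable, r > 0, p ≥ 1, and x₁, x₂ ∈ ℝ². Then the L^p(Ω)-norm of the difference of the indicator functions of B_r(x₁) ∩ Ω and B_r(x₂) ∩ Ω is at most (4 r |x₁ − x₂|)^{1/p}. -/

import Mathlib

/-! The symmetric difference of the two balls has area at most `4 r |x₁ - x₂|`. A translation
followed by the reflection taking `x₁ - x₂` to `|x₁ - x₂| e₁` moves the lune
`B_r(x₁) \ B_r(x₂)` onto `B_r(|x₁ - x₂| e₁) \ B_r(0)`, which up to a null circle lies between
the graphs of `w ↦ √(r² - w²)` and `w ↦ √(r² - w²) + |x₁ - x₂|` over `(-r, r)`, a region of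
area `2 r |x₁ - x₂|` by Fubini. The `L^p` norm of a difference of indicators is the `1/p`-th
power of the measure of the symmetric difference. -/

open MeasureTheory Metric Set
open scoped symmDiff

theorem EuclideanSpace.volume_preserving_coords_fin_two :
    MeasurePreserving (fun x : EuclideanSpace ℝ (Fin 2) => (x 0, x 1)) :=
  (volume_preserving_finTwoArrow ℝ).comp (PiLp.volume_preserving_ofLp (Fin 2))

theorem mem_regionBetween_of_lune {w u d r : ℝ} (hr : 0 < r) (hd : 0 ≤ d)
    (h₁ : w ^ 2 + (u - d) ^ 2 < r ^ 2) (h₂ : r ^ 2 < w ^ 2 + u ^ 2) :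
    (w, u) ∈ regionBetween (fun w => √(r ^ 2 - w ^ 2)) (fun w => √(r ^ 2 - w ^ 2) + d)
      (Ioo (-r) r) := by
  have hw : w ^ 2 < r ^ 2 := by nlinarith
  have hs : √(r ^ 2 - w ^ 2) ^ 2 = r ^ 2 - w ^ 2 := Real.sq_sqrt (by linarith)
  have hs₀ : 0 ≤ √(r ^ 2 - w ^ 2) := Real.sqrt_nonneg _
  have hu : -√(r ^ 2 - w ^ 2) < u - d ∧ u - d < √(r ^ 2 - w ^ 2) :=
    abs_lt_of_sq_lt_sq' (by linarith) hs₀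
  refine ⟨⟨by nlinarith, by nlinarith⟩, ?_, by simp only; linarith⟩
  by_contra! hle
  nlinarith [mul_nonneg (sub_nonneg.2 hle) (by linarith : 0 ≤ √(r ^ 2 - w ^ 2) + u)]

theorem volume_ball_single_diff_closedBall_le (r : ℝ) {d : ℝ} (hd : 0 ≤ d) :
    volume (ball (EuclideanSpace.single 1 d) r \ closedBall (0 : EuclideanSpace ℝ (Fin 2)) r)
      ≤ ENNReal.ofReal (2 * r * d) := by
  set f : ℝ → ℝ := fun w => √(r ^ 2 - w ^ 2)
  have hf : Measurable f := by fun_prop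
  have hsub : ball (EuclideanSpace.single 1 d) r \ closedBall 0 r ⊆
      (fun x : EuclideanSpace ℝ (Fin 2) => (x 0, x 1)) ⁻¹'
        regionBetween f (fun w => f w + d) (Ioo (-r) r) := by
    rintro x ⟨hx₁, hx₂⟩
    have hr : 0 < r := pos_of_mem_ball hx₁
    rw [mem_ball, ← sq_lt_sq₀ dist_nonneg hr.le, EuclideanSpace.dist_sq_eq] at hx₁
    rw [mem_closedBall, not_le, ← sq_lt_sq₀ hr.le dist_nonneg,
      EuclideanSpace.dist_sq_eq] at hx₂
    simp only [Fin.sum_univ_two, Real.dist_eq, sq_abs, PiLp.single_eq_same, ne_eq, zero_ne_one,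
      not_false_eq_true, PiLp.single_eq_of_ne, PiLp.zero_apply, sub_zero] at hx₁ hx₂
    exact mem_regionBetween_of_lune hr hd hx₁ hx₂
  calc _ ≤ volume ((fun x : EuclideanSpace ℝ (Fin 2) => (x 0, x 1)) ⁻¹'
        regionBetween f (fun w => f w + d) (Ioo (-r) r)) := measure_mono hsub
    _ = volume (regionBetween f (fun w => f w + d) (Ioo (-r) r)) :=
      EuclideanSpace.volume_preserving_coords_fin_two.measure_preimage
        (measurableSet_regionBetween hf (hf.add_const d) measurableSet_Ioo).nullMeasurableSet
    _ = ∫⁻ _ in Ioo (-r) r, ENNReal.ofReal d := by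
      rw [Measure.volume_eq_prod,
        volume_regionBetween_eq_lintegral' hf (hf.add_const d) measurableSet_Ioo]
      simp
    _ = ENNReal.ofReal (2 * r * d) := by
      rw [setLIntegral_const, Real.volume_Ioo, ← ENNReal.ofReal_mul hd]
      ring_nf

theorem volume_ball_diff_closedBall_eq {E : Type*} [NormedAddCommGroup E]
    [InnerProductSpace ℝ E] [FiniteDimensional ℝ E] [MeasurableSpace E] [BorelSpace E]
    {x₁ x₂ v : E} (hv : ‖v‖ = dist x₁ x₂) (r : ℝ) :
    volume (ball x₁ r \ closedBall x₂ r) = volume (ball v r \ closedBall 0 r) := by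
  set R := Submodule.reflection (ℝ ∙ (x₁ - x₂ - v))ᗮ
  have hR : R (x₁ - x₂) = v := Submodule.reflection_sub (by rw [hv, dist_eq_norm])
  have hT : MeasurePreserving (fun x => R (x - x₂)) :=
    R.measurePreserving.comp (measurePreserving_sub_right volume x₂)
  have hpre : (fun x => R (x - x₂)) ⁻¹' (ball v r \ closedBall 0 r) =
      ball x₁ r \ closedBall x₂ r := by
    ext x
    simp only [mem_preimage, mem_sdiff, mem_ball, mem_closedBall, ← hR, R.dist_map,
      dist_sub_right, dist_zero_right, R.norm_map, ← dist_eq_norm]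
  rw [← hpre,
    hT.measure_preimage (measurableSet_ball.diff measurableSet_closedBall).nullMeasurableSet]

theorem volume_ball_diff_ball_le (x₁ x₂ : EuclideanSpace ℝ (Fin 2)) (r : ℝ) :
    volume (ball x₁ r \ ball x₂ r) ≤ ENNReal.ofReal (2 * r * dist x₁ x₂) := by
  have hsub : ball x₁ r \ ball x₂ r ⊆ ball x₁ r \ closedBall x₂ r ∪ sphere x₂ r := by
    rintro x ⟨hx₁, hx₂⟩
    by_cases hx : x ∈ closedBall x₂ r
    · exact Or.inr (le_antisymm hx (not_lt.1 hx₂))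
    · exact Or.inl ⟨hx₁, hx⟩
  calc volume (ball x₁ r \ ball x₂ r)
      ≤ volume (ball x₁ r \ closedBall x₂ r) + volume (sphere x₂ r) :=
        (measure_mono hsub).trans (measure_union_le _ _)
    _ = volume (ball (EuclideanSpace.single (1 : Fin 2) (dist x₁ x₂)) r \ closedBall 0 r) := by
      rw [Measure.addHaar_sphere, add_zero,
        volume_ball_diff_closedBall_eq (v := EuclideanSpace.single 1 (dist x₁ x₂)) (by simp)]
    _ ≤ _ := volume_ball_single_diff_closedBall_le r dist_nonneg

theorem volume_ball_symmDiff_ball_le (x₁ x₂ : EuclideanSpace ℝ (Fin 2)) {r : ℝ}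
    (hr : 0 ≤ r) :
    volume (ball x₁ r ∆ ball x₂ r) ≤ ENNReal.ofReal (4 * r * dist x₁ x₂) :=
  calc volume (ball x₁ r ∆ ball x₂ r)
      ≤ ENNReal.ofReal (2 * r * dist x₁ x₂) + ENNReal.ofReal (2 * r * dist x₂ x₁) :=
        (measure_union_le _ _).trans
          (add_le_add (volume_ball_diff_ball_le x₁ x₂ r) (volume_ball_diff_ball_le x₂ x₁ r))
    _ = ENNReal.ofReal (4 * r * dist x₁ x₂) := by
      rw [dist_comm x₂, ← ENNReal.ofReal_add (by positivity) (by positivity)]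
      ring_nf

theorem stmt_2_general (Ω : Set (EuclideanSpace ℝ (Fin 2)))
    (r : ℝ) (hr : 0 < r) (p : ℝ) (hp : 1 ≤ p) (x₁ x₂ : EuclideanSpace ℝ (Fin 2)) :
    eLpNorm
      (fun x => (Metric.ball x₁ r ∩ Ω).indicator (fun _ => (1 : ℝ)) x
        - (Metric.ball x₂ r ∩ Ω).indicator (fun _ => (1 : ℝ)) x)
      (ENNReal.ofReal p) (volume.restrict Ω)
      ≤ ENNReal.ofReal ((4 * r * dist x₁ x₂) ^ (1 / p)) := by
  have hp' : (ENNReal.ofReal p).toReal = p := ENNReal.toReal_ofReal (by linarith)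
  calc _ = eLpNorm (((ball x₁ r ∩ Ω) ∆ (ball x₂ r ∩ Ω)).indicator fun _ => (1 : ℝ))
        (ENNReal.ofReal p) (volume.restrict Ω) := eLpNorm_indicator_sub_indicator _ _ _
    _ ≤ volume.restrict Ω ((ball x₁ r ∩ Ω) ∆ (ball x₂ r ∩ Ω)) ^ (1 / p) := by
      simpa [hp'] using eLpNorm_indicator_const_le (1 : ℝ) (ENNReal.ofReal p)
    _ ≤ volume (ball x₁ r ∆ ball x₂ r) ^ (1 / p) := by
      gcongr ?_ ^ _
      rw [← inter_symmDiff_distrib_right]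
      exact (Measure.restrict_le_self _).trans (measure_mono inter_subset_left)
    _ ≤ ENNReal.ofReal (4 * r * dist x₁ x₂) ^ (1 / p) := by
      gcongr
      exact volume_ball_symmDiff_ball_le x₁ x₂ hr.le
    _ = _ := ENNReal.ofReal_rpow_of_nonneg (by positivity) (by positivity)

theorem stmt_2 (Ω : Set (EuclideanSpace ℝ (Fin 2))) (hΩ : MeasurableSet Ω)
    (r : ℝ) (hr : 0 < r) (p : ℝ) (hp : 1 ≤ p) (x₁ x₂ : EuclideanSpace ℝ (Fin 2)) :
    eLpNorm
      (fun x => (Metric.ball x₁ r ∩ Ω).indicator (fun _ => (1 : ℝ)) x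
        - (Metric.ball x₂ r ∩ Ω).indicator (fun _ => (1 : ℝ)) x)
      (ENNReal.ofReal p) (volume.restrict Ω)
      ≤ ENNReal.ofReal ((4 * r * dist x₁ x₂) ^ (1 / p)) :=
  stmt_2_general Ω r hr p hp x₁ x₂
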